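/- Let J = (a,b) with a < 0 < b, let g : ℝ → ℝ be C² on J with g(0) = 0, g'(0) > 0 and x·g(x) > 0 for all x ∈ J \ {0}, and let G(x) = ∫₀ˣ g(s) ds. If g(x)² − 2·G(x)·g'(x) > 0 for all x ∈ J \ {0}, then x · d/dx(g(x)/x) < 0 for all x ∈ J \ {0}. If instead g(x)² − 2·G(x)·g'(x) < 0 for all x ∈ J \ {0}, then x · d/dx(g(x)/x) > 0 for all x ∈ J \ {0}. -/

import Mathlib

open Set Real Filter Topology

/-! Write `N = g² - 2 G g'` and `D = x g - 2 G`, so that `D' = x g' - g`. On `(0, b)` the quotient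
`φ = D / √G` satisfies `φ' = -x N / (2 G^{3/2})`, and `φ → 0` at `0⁺` because `x g / G → 2`
(L'Hôpital, using `g'(0) > 0`). So if `N > 0` then `φ` decreases from `0`, hence `D < 0`, and
`g (g - x g') = N - g' D` then gives `x g' < g`; for `N < 0` every sign flips, and both cases are
handled at once by multiplying by `ε = ±1`. The side `x < 0` follows by applying this to
`x ↦ -g(-x)`. -/

theorem StrictAntiOn.lt_of_tendsto_nhdsGT {f : ℝ → ℝ} {a b L x : ℝ}
    (hf : StrictAntiOn f (Ioo a b)) (hlim : Tendsto f (𝓝[>] a) (𝓝 L)) (hx : x ∈ Ioo a b) :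
    f x < L := by
  obtain ⟨y, hay, hyx⟩ := exists_between hx.1
  have hy : y ∈ Ioo a b := ⟨hay, hyx.trans hx.2⟩
  calc f x < f y := hf hy hx hyx
    _ ≤ L := ge_of_tendsto hlim <| by
        filter_upwards [Ioo_mem_nhdsGT hay] with z hz
        exact hf.antitoneOn ⟨hz.1, hz.2.trans hy.2⟩ hy hz.2.le

theorem hasDerivAt_integral_of_continuousOn {g : ℝ → ℝ} {a b c x : ℝ}
    (hg : ContinuousOn g (Ioo a b)) (hc : c ∈ Ioo a b) (hx : x ∈ Ioo a b) :
    HasDerivAt (fun y => ∫ s in c..y, g s) (g x) x :=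
  intervalIntegral.integral_hasDerivAt_right
    ((hg.mono (ordConnected_Ioo.uIcc_subset hc hx)).intervalIntegrable)
    (hg.stronglyMeasurableAtFilter isOpen_Ioo x hx) (hg.continuousAt (isOpen_Ioo.mem_nhds hx))

theorem mul_sub_mul_pos_of_mul_sq_sub_pos {ε g g' G x : ℝ} (hx : 0 < x) (hg : 0 < g)
    (hG : 0 < G) (hN : 0 < ε * (g ^ 2 - 2 * G * g')) (hD : ε * (x * g - 2 * G) < 0) :
    0 < ε * (g - x * g') := by
  nlinarith [mul_pos hx hN, mul_pos hg hN, mul_pos hG hN]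

theorem hasDerivAt_mul_sub_two_mul_div_sqrt {g G : ℝ → ℝ} {g'x x : ℝ}
    (hg : HasDerivAt g g'x x) (hG : HasDerivAt G (g x) x) (hGx : 0 < G x) :
    HasDerivAt (fun y => (y * g y - 2 * G y) / √(G y))
      (-(x * (g x ^ 2 - 2 * G x * g'x)) / (2 * √(G x) ^ 3)) x := by
  have hs : 0 < √(G x) := sqrt_pos.mpr hGx
  refine ((((hasDerivAt_id' x).mul hg).sub (hG.const_mul 2)).div (hG.sqrt hGx.ne') hs.ne')
    |>.congr_deriv ?_
  have hGs : G x = √(G x) ^ 2 := (sq_sqrt hGx.le).symm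
  set s := √(G x)
  simp only [Pi.mul_apply, Pi.sub_apply]
  rw [hGs]
  field_simp
  ring

section RightOfZero

variable {g g' G : ℝ → ℝ} {b : ℝ}
  (hgd : ∀ x ∈ Ico 0 b, HasDerivAt g (g' x) x) (hGd : ∀ x ∈ Ico 0 b, HasDerivAt G (g x) x)
  (hG0 : G 0 = 0) (hgpos : ∀ x ∈ Ioo 0 b, 0 < g x)
include hGd hG0 hgpos

theorem pos_of_hasDerivAt_of_pos : ∀ x ∈ Ioo 0 b, 0 < G x := by
  intro x hx
  have hmono : StrictMonoOn G (Ico 0 b) :=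
    strictMonoOn_of_hasDerivWithinAt_pos (convex_Ico 0 b)
      (fun y hy => (hGd y hy).continuousAt.continuousWithinAt)
      (by simpa using fun y hy => (hGd y (Ioo_subset_Ico_self hy)).hasDerivWithinAt)
      (by simpa using hgpos)
  simpa [hG0] using hmono ⟨le_rfl, hx.1.trans hx.2⟩ (Ioo_subset_Ico_self hx) hx.1

include hgd

theorem tendsto_mul_div_nhdsGT_zero (hb : 0 < b) (hg0 : g 0 = 0) (hg'c : ContinuousAt g' 0)
    (hg'0 : 0 < g' 0) : Tendsto (fun x => x * g x / G x) (𝓝[>] 0) (𝓝 2) := by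
  have h0 : (0 : ℝ) ∈ Ico 0 b := ⟨le_rfl, hb⟩
  have hslope : Tendsto (fun x => g x / x) (𝓝[>] 0) (𝓝 (g' 0)) := by
    simpa [hg0, div_eq_inv_mul] using (hgd 0 h0).tendsto_slope_zero_right
  have hquot : Tendsto (fun x => 1 + g' x / (g x / x)) (𝓝[>] 0) (𝓝 2) := by
    have := (hg'c.tendsto.mono_left nhdsWithin_le_nhds).div hslope hg'0.ne'
    rw [div_self hg'0.ne'] at this
    simpa [one_add_one_eq_two] using this.const_add 1
  refine HasDerivAt.lhopital_zero_right_on_Ioo hb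
    (fun x hx => (hasDerivAt_id' x).mul (hgd x (Ioo_subset_Ico_self hx)))
    (fun x hx => hGd x (Ioo_subset_Ico_self hx)) (fun x hx => (hgpos x hx).ne') ?_ ?_ ?_
  · simpa using (((continuousAt_id' 0).fun_mul (hgd 0 h0).continuousAt).tendsto).mono_left
      nhdsWithin_le_nhds
  · simpa [hG0] using (hGd 0 h0).continuousAt.tendsto.mono_left nhdsWithin_le_nhds
  · refine hquot.congr' ?_
    filter_upwards [Ioo_mem_nhdsGT hb] with x hx
    have hgx := (hgpos x hx).ne'
    have hx0 := hx.1.ne'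
    field_simp

theorem tendsto_mul_sub_two_mul_div_sqrt_nhdsGT_zero (hb : 0 < b) (hg0 : g 0 = 0)
    (hg'c : ContinuousAt g' 0) (hg'0 : 0 < g' 0) :
    Tendsto (fun x => (x * g x - 2 * G x) / √(G x)) (𝓝[>] 0) (𝓝 0) := by
  have hsqrt : Tendsto (fun x => √(G x)) (𝓝[>] 0) (𝓝 0) := by
    simpa [hG0] using
      ((hGd 0 ⟨le_rfl, hb⟩).continuousAt.sqrt.tendsto).mono_left nhdsWithin_le_nhds
  have := ((tendsto_mul_div_nhdsGT_zero hgd hGd hG0 hgpos hb hg0 hg'c hg'0).sub_const 2).mul hsqrt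
  rw [sub_self, zero_mul] at this
  refine this.congr' ?_
  filter_upwards [Ioo_mem_nhdsGT hb] with x hx
  have hGx := pos_of_hasDerivAt_of_pos hGd hG0 hgpos x hx
  have hs : 0 < √(G x) := sqrt_pos.mpr hGx
  field_simp
  rw [sq_sqrt hGx.le]
  ring

theorem mul_mul_sub_two_mul_neg (hb : 0 < b) (hg0 : g 0 = 0) (hg'c : ContinuousAt g' 0)
    (hg'0 : 0 < g' 0) {ε : ℝ} (hN : ∀ x ∈ Ioo 0 b, 0 < ε * (g x ^ 2 - 2 * G x * g' x)) :
    ∀ x ∈ Ioo 0 b, ε * (x * g x - 2 * G x) < 0 := by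
  have hGpos := pos_of_hasDerivAt_of_pos hGd hG0 hgpos
  set φ := fun x => ε * ((x * g x - 2 * G x) / √(G x))
  have hφ : ∀ x ∈ Ioo 0 b, HasDerivAt φ
      (-(x * (ε * (g x ^ 2 - 2 * G x * g' x))) / (2 * √(G x) ^ 3)) x := fun x hx =>
    (hasDerivAt_mul_sub_two_mul_div_sqrt (hgd x (Ioo_subset_Ico_self hx))
      (hGd x (Ioo_subset_Ico_self hx)) (hGpos x hx)).const_mul ε |>.congr_deriv (by ring)
  have hanti : StrictAntiOn φ (Ioo 0 b) :=
    strictAntiOn_of_hasDerivWithinAt_neg (convex_Ioo 0 b)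
      (fun x hx => (hφ x hx).continuousAt.continuousWithinAt)
      (by simpa using fun x hx => (hφ x hx).hasDerivWithinAt)
      (by
        simp only [interior_Ioo]
        intro x hx
        have := sqrt_pos.mpr (hGpos x hx)
        exact div_neg_of_neg_of_pos (neg_neg_of_pos (mul_pos hx.1 (hN x hx))) (by positivity))
  have hlim : Tendsto φ (𝓝[>] 0) (𝓝 0) := by
    simpa using
      (tendsto_mul_sub_two_mul_div_sqrt_nhdsGT_zero hgd hGd hG0 hgpos hb hg0 hg'c hg'0).const_mul ε
  intro x hx
  have hs := sqrt_pos.mpr (hGpos x hx)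
  have hφx : ε * (x * g x - 2 * G x) = φ x * √(G x) := by
    simp only [φ]
    field_simp
  rw [hφx]
  exact mul_neg_of_neg_of_pos (hanti.lt_of_tendsto_nhdsGT hlim hx) hs

theorem mul_sub_mul_pos_right (hb : 0 < b) (hg0 : g 0 = 0) (hg'c : ContinuousAt g' 0)
    (hg'0 : 0 < g' 0) {ε : ℝ} (hN : ∀ x ∈ Ioo 0 b, 0 < ε * (g x ^ 2 - 2 * G x * g' x)) :
    ∀ x ∈ Ioo 0 b, 0 < ε * (g x - x * g' x) := fun x hx =>
  mul_sub_mul_pos_of_mul_sq_sub_pos hx.1 (hgpos x hx) (pos_of_hasDerivAt_of_pos hGd hG0 hgpos x hx)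
    (hN x hx) (mul_mul_sub_two_mul_neg hgd hGd hG0 hgpos hb hg0 hg'c hg'0 hN x hx)

end RightOfZero

theorem mul_sub_mul_neg_left {g g' G : ℝ → ℝ} {a : ℝ}
    (hgd : ∀ x ∈ Ioc a 0, HasDerivAt g (g' x) x) (hGd : ∀ x ∈ Ioc a 0, HasDerivAt G (g x) x)
    (hG0 : G 0 = 0) (hgneg : ∀ x ∈ Ioo a 0, g x < 0) (ha : a < 0) (hg0 : g 0 = 0)
    (hg'c : ContinuousAt g' 0) (hg'0 : 0 < g' 0) {ε : ℝ}
    (hN : ∀ x ∈ Ioo a 0, 0 < ε * (g x ^ 2 - 2 * G x * g' x)) :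
    ∀ x ∈ Ioo a 0, ε * (g x - x * g' x) < 0 := by
  have hneg : ∀ {y}, y ∈ Ioo 0 (-a) → -y ∈ Ioo a 0 := fun hy =>
    ⟨by linarith [hy.2], by linarith [hy.1]⟩
  have hnegc : ∀ {y}, y ∈ Ico 0 (-a) → -y ∈ Ioc a 0 := fun hy =>
    ⟨by linarith [hy.2], by linarith [hy.1]⟩
  have hright := mul_sub_mul_pos_right (g := fun y => -g (-y)) (g' := fun y => g' (-y))
    (G := fun y => G (-y)) (b := -a) (ε := ε)
    (fun y hy => ((hgd (-y) (hnegc hy)).comp y (hasDerivAt_neg y)).neg.congr_deriv (by ring))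
    (fun y hy => ((hGd (-y) (hnegc hy)).comp y (hasDerivAt_neg y)).congr_deriv (by simp))
    (by simpa using hG0) (fun y hy => neg_pos.mpr (hgneg (-y) (hneg hy))) (by linarith)
    (by simpa using hg0) (hg'c.comp_of_eq continuous_neg.continuousAt neg_zero)
    (by simpa using hg'0) (fun y hy => by simpa using hN (-y) (hneg hy))
  intro x hx
  have := hright (-x) ⟨by linarith [hx.2], by linarith [hx.1]⟩
  simp only [neg_neg] at this
  linarith

theorem mul_deriv_div_id {g : ℝ → ℝ} {g'x x : ℝ} (hg : HasDerivAt g g'x x) (hx : x ≠ 0) :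
    x * deriv (fun y => g y / y) x = (x * g'x - g x) / x := by
  rw [(hg.fun_div (hasDerivAt_id' x) hx).deriv]
  field_simp

theorem mul_mul_deriv_div_neg {g g' G : ℝ → ℝ} {a b ε : ℝ} (ha : a < 0) (hb : 0 < b)
    (hgd : ∀ x ∈ Ioo a b, HasDerivAt g (g' x) x) (hGd : ∀ x ∈ Ioo a b, HasDerivAt G (g x) x)
    (hg0 : g 0 = 0) (hG0 : G 0 = 0) (hg'c : ContinuousAt g' 0) (hg'0 : 0 < g' 0)
    (hxg : ∀ x ∈ Ioo a b, x ≠ 0 → 0 < x * g x)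
    (hN : ∀ x ∈ Ioo a b, x ≠ 0 → 0 < ε * (g x ^ 2 - 2 * G x * g' x)) :
    ∀ x ∈ Ioo a b, x ≠ 0 → ε * (x * deriv (fun y => g y / y) x) < 0 := by
  have hright : Ico 0 b ⊆ Ioo a b := Ico_subset_Ioo_left ha
  have hleft : Ioc a 0 ⊆ Ioo a b := Ioc_subset_Ioo_right hb
  intro x hx hx0
  rw [mul_deriv_div_id (hgd x hx) hx0, mul_div_assoc']
  rcases hx0.lt_or_gt with hneg | hpos
  · refine div_neg_of_pos_of_neg ?_ hneg
    have := mul_sub_mul_neg_left (fun y hy => hgd y (hleft hy)) (fun y hy => hGd y (hleft hy))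
      hG0 (fun y hy => neg_of_mul_pos_right (hxg y (hleft (Ioo_subset_Ioc_self hy)) hy.2.ne)
        hy.2.le) ha hg0 hg'c hg'0
      (fun y hy => hN y (hleft (Ioo_subset_Ioc_self hy)) hy.2.ne) x ⟨hx.1, hneg⟩
    linarith
  · refine div_neg_of_neg_of_pos ?_ hpos
    have := mul_sub_mul_pos_right (fun y hy => hgd y (hright hy)) (fun y hy => hGd y (hright hy))
      hG0 (fun y hy => pos_of_mul_pos_right (hxg y (hright (Ioo_subset_Ico_self hy)) hy.1.ne')
        hy.1.le) hb hg0 hg'c hg'0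
      (fun y hy => hN y (hright (Ioo_subset_Ico_self hy)) hy.1.ne') x ⟨hpos, hx.2⟩
    linarith

/-- If `g(x)² − 2G(x)g'(x) > 0` on `J \ {0}` then `x · d/dx (g(x)/x) < 0` on `J \ {0}`;
if instead `g(x)² − 2G(x)g'(x) < 0` on `J \ {0}` then `x · d/dx (g(x)/x) > 0` on `J \ {0}`. -/
theorem deriv_div_sign_of_sq_sub_two_G_mul_deriv
    (a b : ℝ) (g : ℝ → ℝ) (ha : a < 0) (hb : 0 < b)
    (hg : ContDiffOn ℝ 2 g (Ioo a b)) (hg0 : g 0 = 0) (hg'0 : 0 < deriv g 0)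
    (hxg : ∀ x ∈ Ioo a b, x ≠ 0 → 0 < x * g x)
    (G : ℝ → ℝ) (hG : ∀ x, G x = ∫ s in (0:ℝ)..x, g s) :
    ((∀ x ∈ Ioo a b, x ≠ 0 → 0 < g x ^ 2 - 2 * G x * deriv g x) →
      ∀ x ∈ Ioo a b, x ≠ 0 → x * deriv (fun y => g y / y) x < 0) ∧
    ((∀ x ∈ Ioo a b, x ≠ 0 → g x ^ 2 - 2 * G x * deriv g x < 0) →
      ∀ x ∈ Ioo a b, x ≠ 0 → 0 < x * deriv (fun y => g y / y) x) := by
  have h0 : (0 : ℝ) ∈ Ioo a b := ⟨ha, hb⟩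
  have hgd : ∀ x ∈ Ioo a b, HasDerivAt g (deriv g x) x := fun x hx =>
    ((hg.differentiableOn two_ne_zero x hx).differentiableAt (isOpen_Ioo.mem_nhds hx)).hasDerivAt
  have hGd : ∀ x ∈ Ioo a b, HasDerivAt G (g x) x := fun x hx => by
    simpa only [← funext hG] using hasDerivAt_integral_of_continuousOn hg.continuousOn h0 hx
  have hG0 : G 0 = 0 := by simp [hG]
  have hg'c : ContinuousAt (deriv g) 0 :=
    (hg.continuousOn_deriv_of_isOpen isOpen_Ioo one_le_two).continuousAt (isOpen_Ioo.mem_nhds h0)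
  constructor <;> intro hN x hx hx0
  · simpa using mul_mul_deriv_div_neg (ε := 1) ha hb hgd hGd hg0 hG0 hg'c hg'0 hxg
      (by simpa using hN) x hx hx0
  · simpa using mul_mul_deriv_div_neg (ε := -1) ha hb hgd hGd hg0 hG0 hg'c hg'0 hxg
      (by simpa using hN) x hx hx0
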